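/- arXiv:1210.4046 — 3 statements merged into one kernel-verified Lean document; each statement's English description precedes it below -/
import Mathlib

section
/- Let $n,N,k$ be positive integers with $N-n \le n-1$. Let $A^a_{\alpha\beta}, B^a_{\alpha\beta}$ ($1\le\alpha,\beta\le n$, $n+1\le a\le N$) be complex numbers, let $(G_{a\bar b})$ be a Hermitian matrix, and let $(g_{\alpha\bar\beta})$ be a positive definite Hermitian matrix. Let $(H^{(l)}_{\alpha\bar\beta}), (\hat H^{(l)}_{\alpha\bar\beta}), (H^{*(l)}_{\alpha\bar\beta}), (\tilde H^{(l)}_{\alpha\bar\beta})$, $1\le l\le k$, be Hermitian matrices. Suppose that for all $X\in\mathbb{C}^n$, $\sum_{a,b=n+1}^N G_{a\bar b} A^a_{\alpha\beta}X^\alpha X^\beta \overline{B^b_{\mu\nu}X^\mu X^\nu} = \sum_{l=1}^k (H^{(l)}_{\alpha\bar\beta}g_{\mu\bar\nu} + \hat H^{(l)}_{\mu\bar\beta}g_{\alpha\bar\nu} + H^{*(l)}_{\alpha\bar\nu}g_{\mu\bar\beta} + \tilde H^{(l)}_{\mu\bar\nu}g_{\alpha\bar\beta})X^\alpha\bar X^\beta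 X^\mu\bar X^\nu$ (summation over repeated Greek indices). Then $\sum_{a,b=n+1}^N G_{a\bar b} A^a_{\alpha\beta}X^\alpha X^\beta \overline{B^b_{\mu\nu}X^\mu X^\nu} = 0$ for all $X\in\mathbb{C}^n$. -/
/-!
Polarization turns the hypothesis into `∑ G_{ab} A^a(W, W) B̄^b(Y, Y) = g(W, Y) K(W, Y)` for
independent `W, Y`, where `K = ∑_l (H + Ĥ + H* + H̃)`. Fix `Z`. As `N - n < n`, some `u ≠ 0`
annihilates every polarization `B̄^b(u, Z) + B̄^b(Z, u)`, and comparing `Y = u, Z, u + Z` gives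
`g(·, u) K(·, Z) + g(·, Z) K(·, u) = 0`. A product of two linear forms vanishing on the hyperplane
`g(·, Z) = 0` has a factor vanishing there, which forces `K(·, Z)` to be a multiple of `g(·, Z)`;
hence `K = μ g`. On a `g`-dual pair of bases, `μ g(W, Y)²` becomes `μ • 1`, yet it factors through
`N - n < n` dimensions, so `μ = 0` and the right-hand side vanishes.
-/

open Complex Module

section Polarization

variable {V : Type*} [AddCommGroup V] [Module ℂ V] [StarAddMonoid V] [StarModule ℂ V]

theorem biquadratic_eq_of_star_diag (β γ : V →ₗ[ℂ] V →ₗ[ℂ] V →ₗ[ℂ] V →ₗ[ℂ] ℂ)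
    (h : ∀ X, β X X (star X) (star X) = γ X X (star X) (star X)) (W Y : V) :
    β W W Y Y = γ W W Y Y := by
  -- In `X = s • W + star Y`, the weights `1, -1, 1, -1` at `s = 1, i, -1, -i` keep exactly the
  -- coefficients of `s ^ 2` and `conj s ^ 2`.
  have hsum (W Y : V) : β W W Y Y + β (star Y) (star Y) (star W) (star W) =
      γ W W Y Y + γ (star Y) (star Y) (star W) (star W) := by
    have h₁ := h (W + star Y)
    have h₂ := h (I • W + star Y)
    have h₃ := h (-W + star Y)
    have h₄ := h (-(I • W) + star Y)
    simp only [star_add, star_neg, star_smul, star_star, map_add, map_neg, map_smul,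
      LinearMap.add_apply, LinearMap.neg_apply, LinearMap.smul_apply, smul_eq_mul,
      Complex.star_def, conj_I] at h₁ h₂ h₃ h₄
    linear_combination (norm := (ring_nf; simp only [I_sq, I_pow_four]; ring))
      (h₁ - h₂ + h₃ - h₄) / 4
  -- `(1 + i) ^ 2 = 2 i` and `(1 - i) ^ 2 = -2 i` separate the two terms of `hsum`.
  have h' := hsum ((1 + I) • W) Y
  simp only [star_smul, map_smul, LinearMap.smul_apply, smul_eq_mul, Complex.star_def, map_add,
    map_one, conj_I] at h'
  have hI : I * β W W Y Y = I * γ W W Y Y := by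
    linear_combination (norm := (ring_nf; simp only [I_sq]; ring)) (h' + 2 * I * hsum W Y) / 4
  exact mul_left_cancel₀ I_ne_zero hI

theorem sum_mul_eq_mul_of_star_diag {m : Type*} [Fintype m] (G : m → m → ℂ)
    (P Q : m → LinearMap.BilinForm ℂ V) (g K : LinearMap.BilinForm ℂ V)
    (h : ∀ X, ∑ a, ∑ b, G a b * P a X X * Q b (star X) (star X) = g X (star X) * K X (star X))
    (W Y : V) : ∑ a, ∑ b, G a b * P a W W * Q b Y Y = g W Y * K W Y := by
  let bilinMul (b₁ b₂ : LinearMap.BilinForm ℂ V) : V →ₗ[ℂ] V →ₗ[ℂ] V →ₗ[ℂ] V →ₗ[ℂ] ℂ :=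
    b₁.compr₂ (LinearMap.toSpanSingleton ℂ (V →ₗ[ℂ] V →ₗ[ℂ] ℂ) b₂)
  let β := ∑ a, ∑ b, G a b • bilinMul (P a) (Q b)
  let γ := (LinearMap.lflip (R₀ := ℂ)).toLinearMap ∘ₗ bilinMul g K
  have hβ (X U Y W : V) : β X U Y W = ∑ a, ∑ b, G a b * P a X U * Q b Y W := by
    simp [β, bilinMul, mul_assoc]
  have hγ (X U Y W : V) : γ X U Y W = g X Y * K U W := by
    simp [γ, bilinMul]
  have := biquadratic_eq_of_star_diag β γ (fun X => by rw [hβ, hγ, h]) W Y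
  rwa [hβ, hγ] at this

end Polarization

section Rigidity

variable {𝕜 V : Type*} [Field 𝕜] [AddCommGroup V] [Module 𝕜 V]

theorem mem_span_singleton_or_mem_span_singleton_of_mul_eq_zero {a b c : Dual 𝕜 V}
    (h : ∀ W, c W = 0 → a W * b W = 0) : a ∈ 𝕜 ∙ c ∨ b ∈ 𝕜 ∙ c := by
  have hker : (LinearMap.ker c : Set V) ⊆ LinearMap.ker a ∪ LinearMap.ker b :=
    fun W hW => mul_eq_zero.1 (h W hW)
  have hspan {d : Dual 𝕜 V} (hd : LinearMap.ker c ≤ LinearMap.ker d) : d ∈ 𝕜 ∙ c := by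
    simpa using mem_span_of_iInf_ker_le_ker (L := fun _ : Unit => c) (by simpa using hd)
  exact (AddSubgroupClass.subset_union.1 hker).imp hspan hspan

variable {m : Type*} [Fintype m]

theorem cross_terms_eq_zero_of_polar_eq_zero {g K : LinearMap.BilinForm 𝕜 V} {C : m → V → 𝕜}
    {D : m → LinearMap.BilinForm 𝕜 V} (h : ∀ W Y, ∑ b, C b W * D b Y Y = g W Y * K W Y)
    {u Z : V} (hu : ∀ b, D b u Z + D b Z u = 0) (W : V) :
    g W u * K W Z + g W Z * K W u = 0 := by
  have hD (b : m) : D b (u + Z) (u + Z) = D b u u + D b Z Z := by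
    simp only [map_add, LinearMap.add_apply]
    linear_combination hu b
  have := h W (u + Z)
  simp only [hD, mul_add, Finset.sum_add_distrib] at this
  rw [h, h, map_add, map_add] at this
  linear_combination -this

theorem exists_ne_zero_forall_polar_eq_zero [FiniteDimensional 𝕜 V]
    (hm : Fintype.card m < finrank 𝕜 V) (D : m → LinearMap.BilinForm 𝕜 V) (Z : V) :
    ∃ u ≠ 0, ∀ b, D b u Z + D b Z u = 0 := by
  obtain ⟨u, hu, hu0⟩ := (Submodule.ne_bot_iff _).1 <|
    LinearMap.ker_ne_bot_of_finrank_lt (f := LinearMap.pi fun b => (D b).flip Z + D b Z)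
      (by simpa using hm)
  exact ⟨u, hu0, fun b => by simpa using congr_fun hu b⟩

theorem flip_mem_span_singleton_flip [FiniteDimensional 𝕜 V] [NeZero (2 : 𝕜)]
    {g K : LinearMap.BilinForm 𝕜 V} (hg : g.Nondegenerate) (hm : Fintype.card m < finrank 𝕜 V)
    {C : m → V → 𝕜} {D : m → LinearMap.BilinForm 𝕜 V}
    (h : ∀ W Y, ∑ b, C b W * D b Y Y = g W Y * K W Y) (Z : V) :
    K.flip Z ∈ 𝕜 ∙ g.flip Z := by
  obtain ⟨u, hu0, hu⟩ := exists_ne_zero_forall_polar_eq_zero hm D Z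
  have hcross := cross_terms_eq_zero_of_polar_eq_zero h hu
  refine (mem_span_singleton_or_mem_span_singleton_of_mul_eq_zero (a := g.flip u) (b := K.flip Z)
    (c := g.flip Z) fun W hW => ?_).elim (fun hgu => ?_) id
  · rw [LinearMap.BilinForm.flip_apply] at hW
    simpa [hW] using hcross W
  -- If `g(·, u)` is a multiple of `g(·, Z)`, so is `u` of `Z`, and the cross terms collapse to
  -- `2 c g(·, Z) K(·, Z)`.
  obtain ⟨c, hc⟩ := Submodule.mem_span_singleton.1 hgu
  have huc : u = c • Z := by
    refine sub_eq_zero.1 (hg.2 _ fun W => ?_)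
    simpa [sub_eq_zero] using (LinearMap.congr_fun hc W).symm
  subst huc
  have hc0 : c ≠ 0 := by rintro rfl; simp at hu0
  have hprod (W : V) : g.flip Z W * K.flip Z W = 0 := by
    have := hcross W
    simp only [map_smul, smul_eq_mul] at this
    have : c * 2 * (g W Z * K W Z) = 0 := by linear_combination this
    simpa [hc0, two_ne_zero] using this
  rcases mem_span_singleton_or_mem_span_singleton_of_mul_eq_zero (c := 0) (fun W _ => hprod W)
    with hZ | hZ <;> rw [Submodule.span_zero_singleton, Submodule.mem_bot] at hZ
  · have : Z = 0 := hg.2 Z fun W => by simpa using LinearMap.congr_fun hZ W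
    simp [this] at hu0
  · rw [hZ]
    exact zero_mem _

theorem exists_eq_smul_of_flip_mem_span_singleton_flip [FiniteDimensional 𝕜 V]
    {g K : LinearMap.BilinForm 𝕜 V} (hg : g.Nondegenerate) (h : ∀ Z, K.flip Z ∈ 𝕜 ∙ g.flip Z) :
    ∃ μ : 𝕜, K = μ • g := by
  let e := g.flip.toDual hg.flip
  have he (Z : V) : g.flip Z = e Z := rfl
  obtain ⟨μ, hμ⟩ := LinearMap.exists_eq_smul_id_of_forall_notLinearIndependent
    (f := e.symm.toLinearMap ∘ₗ K.flip) fun Z => by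
      obtain ⟨c, hc⟩ := Submodule.mem_span_singleton.1 (h Z)
      rw [LinearIndependent.pair_iff]
      push Not
      refine ⟨c, -1, ?_, by simp⟩
      simp [← hc, he]
  refine ⟨μ, LinearMap.ext fun W => LinearMap.ext fun Y => ?_⟩
  have hY : K.flip Y = μ • g.flip Y := by
    simpa [he] using congr_arg e (LinearMap.congr_fun hμ Y)
  simpa using LinearMap.congr_fun hY W

theorem eq_zero_of_sum_mul_eq_mul_sq [FiniteDimensional 𝕜 V] {g : LinearMap.BilinForm 𝕜 V}
    (hg : g.Nondegenerate) (hm : Fintype.card m < finrank 𝕜 V) (C D : m → V → 𝕜) {μ : 𝕜}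
    (h : ∀ W Y, ∑ b, C b W * D b Y = μ * g W Y ^ 2) : μ = 0 := by
  by_contra hμ
  let b := finBasis 𝕜 V
  let e := g.toDual hg
  let P : Matrix (Fin (finrank 𝕜 V)) m 𝕜 := Matrix.of fun i c => C c (e.symm (b.coord i))
  let Q : Matrix m (Fin (finrank 𝕜 V)) 𝕜 := Matrix.of fun c j => μ⁻¹ * D c (b j)
  have hPQ : P * Q = 1 := by
    ext i j
    simp only [P, Q, Matrix.mul_apply, Matrix.of_apply, mul_left_comm _ μ⁻¹, ← Finset.mul_sum, h,
      e, LinearMap.BilinForm.apply_toDual_symm_apply, Basis.coord_apply, Basis.repr_self,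
      Finsupp.single_apply, Matrix.one_apply]
    split_ifs <;> simp_all [eq_comm]
  have := (Matrix.rank_mul_le_left P Q).trans (Matrix.rank_le_card_width P)
  rw [hPQ, Matrix.rank_one, Fintype.card_fin] at this
  omega

theorem bilinForm_eq_zero_of_sum_mul_eq_mul [FiniteDimensional 𝕜 V] [NeZero (2 : 𝕜)]
    {g K : LinearMap.BilinForm 𝕜 V} (hg : g.Nondegenerate) (hm : Fintype.card m < finrank 𝕜 V)
    (C : m → V → 𝕜) (D : m → LinearMap.BilinForm 𝕜 V)
    (h : ∀ W Y, ∑ b, C b W * D b Y Y = g W Y * K W Y) : K = 0 := by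
  obtain ⟨μ, rfl⟩ :=
    exists_eq_smul_of_flip_mem_span_singleton_flip hg (flip_mem_span_singleton_flip hg hm h)
  have hμ : μ = 0 := eq_zero_of_sum_mul_eq_mul_sq hg hm C (fun b Y => D b Y Y) fun W Y => by
    rw [h]; simp only [LinearMap.smul_apply, smul_eq_mul]; ring
  rw [hμ, zero_smul]

end Rigidity

theorem sum_sum_sum_comm {ι M : Type*} [Fintype ι] [AddCommMonoid M] (f : ι → ι → ι → M) :
    ∑ a, ∑ b, ∑ c, f a b c = ∑ c, ∑ b, ∑ a, f a b c := by
  rw [Finset.sum_comm]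
  exact (Finset.sum_congr rfl fun b _ => Finset.sum_comm).trans Finset.sum_comm

section MatrixForms

variable {ι R : Type*} [Fintype ι] [DecidableEq ι] [CommSemiring R]

theorem sum_sum_mul_eq_toLinearMap₂' (M : ι → ι → R) (X Y : ι → R) :
    ∑ α, ∑ β, M α β * X α * Y β = Matrix.toLinearMap₂' R (Matrix.of M) X Y := by
  simp only [Matrix.toLinearMap₂'_apply, Matrix.of_apply, smul_eq_mul]
  exact Finset.sum_congr rfl fun _ _ => Finset.sum_congr rfl fun _ _ => by ring

theorem star_toLinearMap₂'_apply [StarRing R] (M : Matrix ι ι R) (X Y : ι → R) :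
    star (Matrix.toLinearMap₂' R M X Y) =
      Matrix.toLinearMap₂' R (M.map star) (star X) (star Y) := by
  simp [Matrix.toLinearMap₂'_apply, star_sum, star_mul']

theorem toLinearMap₂'_apply_mul_toLinearMap₂'_apply (M N : Matrix ι ι R) (X Y : ι → R) :
    Matrix.toLinearMap₂' R M X Y * Matrix.toLinearMap₂' R N X Y =
      ∑ α, ∑ β, ∑ μ, ∑ ν, M α β * N μ ν * X α * Y β * X μ * Y ν := by
  simp only [Matrix.toLinearMap₂'_apply, smul_eq_mul, Finset.sum_mul]
  simp only [Finset.mul_sum, mul_comm, mul_left_comm]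

theorem huang_sum_eq_toLinearMap₂'_mul {κ : Type*} [Fintype κ] (H Hh Hs Ht : κ → Matrix ι ι R)
    (g : Matrix ι ι R) (X Y : ι → R) :
    ∑ l, ∑ α, ∑ β, ∑ μ, ∑ ν,
        (H l α β * g μ ν + Hh l μ β * g α ν + Hs l α ν * g μ β + Ht l μ ν * g α β) *
          X α * Y β * X μ * Y ν =
      Matrix.toLinearMap₂' R g X Y *
        Matrix.toLinearMap₂' R (∑ l, (H l + Hh l + Hs l + Ht l)) X Y := by
  simp only [map_sum, map_add, LinearMap.coe_sum, Finset.sum_apply, LinearMap.add_apply,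
    Finset.mul_sum, mul_add]
  refine Finset.sum_congr rfl fun l _ => ?_
  simp only [add_mul, Finset.sum_add_distrib]
  rw [mul_comm _ (Matrix.toLinearMap₂' R (H l) X Y), mul_comm _ (Matrix.toLinearMap₂' R (Hh l) X Y),
    mul_comm _ (Matrix.toLinearMap₂' R (Hs l) X Y), toLinearMap₂'_apply_mul_toLinearMap₂'_apply,
    toLinearMap₂'_apply_mul_toLinearMap₂'_apply, toLinearMap₂'_apply_mul_toLinearMap₂'_apply,
    toLinearMap₂'_apply_mul_toLinearMap₂'_apply]
  congr 1; congr 1; congr 1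
  · rw [sum_sum_sum_comm]
    simp only [mul_comm, mul_left_comm]
  · refine Finset.sum_congr rfl fun α _ => ?_
    rw [sum_sum_sum_comm]
    simp only [mul_comm, mul_left_comm]
  · simp only [mul_comm, mul_left_comm]

end MatrixForms

theorem nondegenerate_toLinearMap₂'_of_re_pos {ι : Type*} [Fintype ι] [DecidableEq ι]
    {g : Matrix ι ι ℂ} (h : ∀ X : ι → ℂ, X ≠ 0 → 0 < (Matrix.toLinearMap₂' ℂ g X (star X)).re) :
    (Matrix.toLinearMap₂' ℂ g : LinearMap.BilinForm ℂ (ι → ℂ)).Nondegenerate := by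
  refine Matrix.Nondegenerate.toLinearMap₂' (Matrix.nondegenerate_of_det_ne_zero fun hdet => ?_)
  obtain ⟨v, hv0, hv⟩ := Matrix.exists_mulVec_eq_zero_iff.2 hdet
  have := h (star v) (by simpa using hv0)
  rw [star_star, Matrix.toLinearMap₂'_apply', hv, dotProduct_zero, Complex.zero_re] at this
  exact lt_irrefl _ this

open Complex in
theorem tensor_rigidity_lemma_general (n N k : ℕ) (hn : 0 < n)
    (hdim : N - n ≤ n - 1)
    (A B : Fin (N - n) → Fin n → Fin n → ℂ)
    (G : Fin (N - n) → Fin (N - n) → ℂ)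
    (g : Fin n → Fin n → ℂ)
    (hgPos : ∀ X : Fin n → ℂ, X ≠ 0 →
      0 < (∑ α, ∑ β, g α β * X α * (starRingEnd ℂ) (X β)).re)
    (H Hhat Hstar Htilde : Fin k → Fin n → Fin n → ℂ)
    (heq : ∀ X : Fin n → ℂ,
      ∑ a, ∑ b, G a b * (∑ α, ∑ β, A a α β * X α * X β) *
          (starRingEnd ℂ) (∑ μ, ∑ ν, B b μ ν * X μ * X ν) =
        ∑ l, ∑ α, ∑ β, ∑ μ, ∑ ν,
          (H l α β * g μ ν + Hhat l μ β * g α ν + Hstar l α ν * g μ β +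
              Htilde l μ ν * g α β) *
            X α * (starRingEnd ℂ) (X β) * X μ * (starRingEnd ℂ) (X ν)) :
    ∀ X : Fin n → ℂ,
      ∑ a, ∑ b, G a b * (∑ α, ∑ β, A a α β * X α * X β) *
          (starRingEnd ℂ) (∑ μ, ∑ ν, B b μ ν * X μ * X ν) = 0 := by
  intro X
  let K : Matrix (Fin n) (Fin n) ℂ := ∑ l, (Matrix.of (H l) + Matrix.of (Hhat l) +
    Matrix.of (Hstar l) + Matrix.of (Htilde l))
  have hrhs (X : Fin n → ℂ) := huang_sum_eq_toLinearMap₂'_mul (fun l => Matrix.of (H l))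
    (fun l => Matrix.of (Hhat l)) (fun l => Matrix.of (Hstar l)) (fun l => Matrix.of (Htilde l))
    (Matrix.of g) X (star X)
  have hpol (W Y : Fin n → ℂ) :
      ∑ b, (∑ a, G a b * Matrix.toLinearMap₂' ℂ (Matrix.of (A a)) W W) *
          Matrix.toLinearMap₂' ℂ ((Matrix.of (B b)).map star) Y Y =
        Matrix.toLinearMap₂' ℂ (Matrix.of g) W Y * Matrix.toLinearMap₂' ℂ K W Y := by
    simp only [Finset.sum_mul]
    rw [Finset.sum_comm]
    refine sum_mul_eq_mul_of_star_diag G _ _ _ _ (fun X => ?_) W Y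
    simpa only [sum_sum_mul_eq_toLinearMap₂', starRingEnd_apply, star_toLinearMap₂'_apply]
      using (heq X).trans (hrhs X)
  have hg := nondegenerate_toLinearMap₂'_of_re_pos (g := Matrix.of g) fun X hX =>
    (hgPos X hX).trans_eq (by rw [sum_sum_mul_eq_toLinearMap₂']; rfl)
  have hK := bilinForm_eq_zero_of_sum_mul_eq_mul hg (by simp; omega) _ _ hpol
  refine (heq X).trans ((hrhs X).trans ?_)
  rw [hK, LinearMap.zero_apply, LinearMap.zero_apply, mul_zero]

open Complex in
/-- Tensor version of Huang's rigidity lemma (Lemma 2.1). -/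
theorem tensor_rigidity_lemma (n N k : ℕ) (hn : 0 < n) (hN : 0 < N) (hk : 0 < k)
    (hdim : N - n ≤ n - 1)
    (A B : Fin (N - n) → Fin n → Fin n → ℂ)
    (G : Fin (N - n) → Fin (N - n) → ℂ)
    (hG : ∀ a b, G a b = (starRingEnd ℂ) (G b a))
    (g : Fin n → Fin n → ℂ)
    (hgHerm : ∀ α β, g α β = (starRingEnd ℂ) (g β α))
    (hgPos : ∀ X : Fin n → ℂ, X ≠ 0 →
      0 < (∑ α, ∑ β, g α β * X α * (starRingEnd ℂ) (X β)).re)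
    (H Hhat Hstar Htilde : Fin k → Fin n → Fin n → ℂ)
    (hH : ∀ l α β, H l α β = (starRingEnd ℂ) (H l β α))
    (hHhat : ∀ l α β, Hhat l α β = (starRingEnd ℂ) (Hhat l β α))
    (hHstar : ∀ l α β, Hstar l α β = (starRingEnd ℂ) (Hstar l β α))
    (hHtilde : ∀ l α β, Htilde l α β = (starRingEnd ℂ) (Htilde l β α))
    (heq : ∀ X : Fin n → ℂ,
      ∑ a, ∑ b, G a b * (∑ α, ∑ β, A a α β * X α * X β) *
          (starRingEnd ℂ) (∑ μ, ∑ ν, B b μ ν * X μ * X ν) =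
        ∑ l, ∑ α, ∑ β, ∑ μ, ∑ ν,
          (H l α β * g μ ν + Hhat l μ β * g α ν + Hstar l α ν * g μ β +
              Htilde l μ ν * g α β) *
            X α * (starRingEnd ℂ) (X β) * X μ * (starRingEnd ℂ) (X ν)) :
    ∀ X : Fin n → ℂ,
      ∑ a, ∑ b, G a b * (∑ α, ∑ β, A a α β * X α * X β) *
          (starRingEnd ℂ) (∑ μ, ∑ ν, B b μ ν * X μ * X ν) = 0 :=
  tensor_rigidity_lemma_general n N k hn hdim A B G g hgPos H Hhat Hstar Htilde heq
end

section
/- Let $n \ge 2$ and let $A^a_{\alpha\beta}$ ($1\le\alpha,\beta\le n$, $a$ in a finite index set $S$ with $|S| \le n-1$) be complex numbers symmetric in $\alpha,\beta$, and suppose there exists a real-valued function $A(X,\bar X)$, real-analytic in $X \in \mathbb{C}^n$, such that $\sum_{a\in S}\Big|\sum_{\alpha,\beta}A^a_{\alpha\beta}X^\alpha X^\beta\Big|^2 = |X|^2 A(X,\bar X)$ for all $X\in\mathbb{C}^n$. Then $A^a_{\alpha\beta} = 0$ for all $a, \alpha, \beta$. -/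
/-!
Let `Bₐ` be the bilinear form with matrix `Aᵃ`. Replacing `X` by `c • X` in the identity shows
that `A` is homogeneous of degree two and invariant under `X ↦ c • X` for `‖c‖ = 1`. Being `C²`,
it is therefore a Hermitian form `H(X, X)`, which is positive semidefinite because the left-hand
side is nonnegative. Polarizing the identity along `X = v + ζ • w` and averaging over the fourth
roots of unity `ζ` gives
`∑ₐ |Bₐ(v, w) + Bₐ(w, v)|² = ‖v‖² H(w, w) + ‖w‖² H(v, v) + 2 Re (⟪v, w⟫ conj H(v, w))`.
If `H(v, v) > 0`, the `|S| < n` linear conditions `Bₐ(v, w) + Bₐ(w, v) = 0` have a solution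
`w ≠ 0`. It is not parallel to `v`, since otherwise every `Bₐ(v, v)` vanishes and then so does
`H(v, v)`. Cauchy–Schwarz for `⟪·, ·⟫` (strict) and for `H`, together with AM–GM, then make the
right-hand side positive. Hence `H = 0`, and every quadratic form `Bₐ(X, X)` vanishes.
-/

open Complex Finset Module
open scoped ComplexConjugate ComplexOrder

theorem fderiv_fderiv_zero_apply_self_of_homogeneous {F : Type*} [NormedAddCommGroup F]
    [NormedSpace ℝ F] {f : F → ℝ} (hf : ContDiff ℝ 2 f)
    (hhom : ∀ (t : ℝ) x, f (t • x) = t ^ 2 * f x) (x : F) :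
    fderiv ℝ (fderiv ℝ f) 0 x x = 2 * f x := by
  have hline : ∀ t : ℝ, HasDerivAt (fun s : ℝ => s • x) x t := fun t => by
    simpa using (hasDerivAt_id t).smul_const x
  have hslope : ∀ t : ℝ, fderiv ℝ f (t • x) x = 2 * t * f x := fun t => by
    have h1 := (hf.differentiable two_ne_zero (t • x)).hasFDerivAt.comp_hasDerivAt t (hline t)
    have h2 : HasDerivAt (fun s : ℝ => s ^ 2 * f x) (2 * t * f x) t := by
      simpa using (hasDerivAt_pow 2 t).mul_const (f x)
    exact h1.unique (h2.congr_of_eventuallyEq (.of_forall fun s => hhom s x))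
  have h3 : HasDerivAt (fun s : ℝ => fderiv ℝ f (s • x) x) (fderiv ℝ (fderiv ℝ f) 0 x x) 0 := by
    have hD : HasFDerivAt (fderiv ℝ f) (fderiv ℝ (fderiv ℝ f) 0) ((0 : ℝ) • x) := by
      rw [zero_smul]
      exact ((hf.fderiv_right (m := 1) le_rfl).differentiable one_ne_zero 0).hasFDerivAt
    have hcomp : HasDerivAt (fun s : ℝ => fderiv ℝ f (s • x)) (fderiv ℝ (fderiv ℝ f) 0 x) 0 :=
      hD.comp_hasDerivAt (x := (0 : ℝ)) (hline 0)
    have := hcomp.clm_apply (hasDerivAt_const (0 : ℝ) x)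
    rwa [map_zero, add_zero] at this
  have h4 : HasDerivAt (fun s : ℝ => fderiv ℝ f (s • x) x) (2 * f x) 0 := by
    simp_rw [hslope]
    simpa using ((hasDerivAt_id (0 : ℝ)).const_mul 2).mul_const (f x)
  exact h3.unique h4

theorem exists_isSymm_sesqForm_of_realBilin {F : Type*} [AddCommGroup F] [Module ℝ F]
    [Module ℂ F] [IsScalarTower ℝ ℂ F] (D : F →ₗ[ℝ] F →ₗ[ℝ] ℝ) (hD : ∀ x y, D x y = D y x)
    (hI : ∀ x, D (I • x) (I • x) = D x x) :
    ∃ h : F →ₗ⋆[ℂ] F →ₗ[ℂ] ℂ, h.IsSymm ∧ ∀ x, h x x = D x x := by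
  have hII : ∀ x y, D (I • x) (I • y) = D x y := by
    intro x y
    have := hI (x + y)
    simp only [smul_add, map_add, LinearMap.add_apply, hI, hD (I • y) (I • x), hD y x] at this
    linarith
  have hIflip : ∀ x y, D (I • x) y = -D x (I • y) := by
    intro x y
    rw [← hII, smul_smul, I_mul_I, neg_one_smul, map_neg, LinearMap.neg_apply]
  set h₀ : F → Module.Dual ℂ F := fun x => Module.Dual.extendRCLike (D x)
  have h₀_apply : ∀ x y, h₀ x y = D x y - I * D x (I • y) := fun x y => by
    simp [h₀, Module.Dual.extendRCLike_apply, RCLike.I_to_complex]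
  have hsymm : ∀ x y, conj (h₀ x y) = h₀ y x := by
    intro x y
    rw [h₀_apply, h₀_apply, hD x y, hD y (I • x), hIflip]
    simp only [map_sub, map_mul, conj_ofReal, conj_I, ofReal_neg]
    ring
  -- `h₀ x` is `ℂ`-linear by construction; conjugate-linearity in `x` is inherited through `hsymm`.
  refine ⟨{ toFun := h₀
            map_add' := fun x x' => by
              ext y; simp only [LinearMap.add_apply, h₀_apply, map_add, ofReal_add]; ring
            map_smul' := fun c x => by
              ext y
              rw [LinearMap.smul_apply, ← hsymm, map_smul, smul_eq_mul, map_mul, hsymm]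
              rfl }, ⟨hsymm⟩, fun x => ?_⟩
  have : D x (I • x) = 0 := by linarith [hIflip x x, hD (I • x) x]
  simp [h₀_apply, this]

theorem exists_isSymm_sesqForm_of_contDiff {F : Type*} [NormedAddCommGroup F] [NormedSpace ℂ F]
    {f : F → ℝ} (hf : ContDiff ℝ 2 f) (hhom : ∀ (c : ℂ) x, f (c • x) = ‖c‖ ^ 2 * f x) :
    ∃ h : F →ₗ⋆[ℂ] F →ₗ[ℂ] ℂ, h.IsSymm ∧ ∀ x, h x x = f x := by
  set D := fderiv ℝ (fderiv ℝ f) 0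
  have hdiag : ∀ x, D x x = 2 * f x := by
    refine fderiv_fderiv_zero_apply_self_of_homogeneous hf fun t x => ?_
    rw [RCLike.real_smul_eq_coe_smul (K := ℂ), hhom]
    simp
  have hD : ∀ x y, D x y = D y x := hf.contDiffAt.isSymmSndFDerivAt (by simp)
  obtain ⟨h, hh, hxx⟩ := exists_isSymm_sesqForm_of_realBilin ((2⁻¹ : ℝ) • D.toLinearMap₁₂)
    (fun x y => by simp [hD x y]) (fun x => by simp [hdiag, hhom])
  exact ⟨h, hh, fun x => by simp [hxx, hdiag]⟩

theorem sum_I_pow_norm_sq_quadratic (p r s : ℂ) :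
    ∑ k : Fin 4, ‖p + I ^ (k : ℕ) * r + (I ^ (k : ℕ)) ^ 2 * s‖ ^ 2 =
      4 * (‖p‖ ^ 2 + ‖r‖ ^ 2 + ‖s‖ ^ 2) := by
  simp only [Fin.sum_univ_four, ← normSq_eq_norm_sq, normSq_apply]
  simp [pow_succ]
  ring

theorem sum_I_pow_re_mul_re (a b : ℝ) (β γ : ℂ) :
    ∑ k : Fin 4, (a + 2 * (I ^ (k : ℕ) * β).re) * (b + 2 * (I ^ (k : ℕ) * γ).re) =
      4 * (a * b) + 8 * (β * conj γ).re := by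
  simp [Fin.sum_univ_four, pow_succ]
  ring

section SesquilinearForm

variable {E : Type*} [AddCommGroup E] [Module ℂ E] {S : Type*} [Fintype S]

theorem LinearMap.IsPosSemidef.norm_sq_apply_le {h : E →ₗ⋆[ℂ] E →ₗ[ℂ] ℂ} (hh : h.IsPosSemidef)
    (x y : E) : ‖h x y‖ ^ 2 ≤ (h x x).re * (h y y).re := by
  let _ : PreInnerProductSpace.Core ℂ E :=
    { inner x y := h x y
      conj_inner_symm x y := hh.isSymm.eq y x
      re_inner_nonneg x := (nonneg_iff.1 (hh.isNonneg.nonneg x)).1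
      add_left x y z := by simp
      smul_left x y r := by simp }
  have hCS := InnerProductSpace.Core.inner_mul_inner_self_le (𝕜 := ℂ) x y
  rw [InnerProductSpace.Core.norm_inner_symm (𝕜 := ℂ) y x, ← sq] at hCS
  exact hCS

theorem LinearMap.IsSymm.re_apply_add_smul_self {h : E →ₗ⋆[ℂ] E →ₗ[ℂ] ℂ} (hh : h.IsSymm)
    (v w : E) {ζ : ℂ} (hζ : ‖ζ‖ = 1) :
    (h (v + ζ • w) (v + ζ • w)).re = (h v v).re + (h w w).re + 2 * (ζ * h v w).re := by
  have hζ' : ζ.re * ζ.re + ζ.im * ζ.im = 1 := by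
    rw [← normSq_apply, normSq_eq_norm_sq, hζ]; simp
  simp only [map_add, map_smulₛₗ, LinearMap.add_apply, LinearMap.smul_apply, smul_eq_mul,
    RingHom.id_apply, ← hh.eq v w, add_re, add_im, mul_re, mul_im, conj_re, conj_im]
  linear_combination (h w w).re * hζ'

theorem sum_norm_sq_add_flip_eq (B : S → E →ₗ[ℂ] E →ₗ[ℂ] ℂ) {g h : E →ₗ⋆[ℂ] E →ₗ[ℂ] ℂ}
    (hg : g.IsSymm) (hh : h.IsSymm)
    (hid : ∀ X, ∑ a, ‖B a X X‖ ^ 2 = (g X X).re * (h X X).re) (v w : E) :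
    ∑ a, ‖B a v w + B a w v‖ ^ 2 =
      (g v v).re * (h w w).re + (g w w).re * (h v v).re + 2 * (g v w * conj (h v w)).re := by
  have hζ : ∀ k : ℕ, ‖I ^ k‖ = 1 := by simp
  have hexp : ∀ a (ζ : ℂ), B a (v + ζ • w) (v + ζ • w) =
      B a v v + ζ * (B a v w + B a w v) + ζ ^ 2 * B a w w := by
    intro a ζ
    simp only [map_add, map_smul, LinearMap.add_apply, LinearMap.smul_apply, smul_eq_mul]
    ring
  have havg := Finset.sum_congr (s₁ := univ) rfl fun (k : Fin 4) _ => hid (v + I ^ (k : ℕ) • w)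
  simp only [hexp, hg.re_apply_add_smul_self v w (hζ _), hh.re_apply_add_smul_self v w (hζ _)]
    at havg
  rw [Finset.sum_comm, sum_I_pow_re_mul_re] at havg
  simp only [sum_I_pow_norm_sq_quadratic, ← Finset.mul_sum, Finset.sum_add_distrib, hid v, hid w]
    at havg
  linarith

end SesquilinearForm

theorem two_mul_mul_lt_sq_mul_add_sq_mul {p q x y s m : ℝ} (hp : 0 < p) (hq : 0 < q) (hx : 0 < x)
    (hy : 0 ≤ y) (hm : 0 ≤ m) (hs : s < p * q) (hm2 : m ^ 2 ≤ x * y) :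
    2 * (s * m) < p ^ 2 * y + q ^ 2 * x := by
  rcases hm.eq_or_lt with rfl | hm
  · nlinarith [mul_pos (mul_pos hq hq) hx, mul_nonneg (sq_nonneg p) hy]
  · have h2 : 2 * (p * q * m) ≤ p ^ 2 * y + q ^ 2 * x := by
      refine (pow_le_pow_iff_left₀ (by positivity) (by positivity) two_ne_zero).1 ?_
      nlinarith [sq_nonneg (p ^ 2 * y - q ^ 2 * x),
        mul_le_mul_of_nonneg_left hm2 (sq_nonneg (p * q))]
    nlinarith [mul_lt_mul_of_pos_right hs hm]

section InnerProductSpace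

variable {E : Type*} [NormedAddCommGroup E] [InnerProductSpace ℂ E] {S : Type*} [Fintype S]
  (B : S → E →ₗ[ℂ] E →ₗ[ℂ] ℂ) {f : E → ℝ}

theorem exists_ne_zero_forall_add_flip_eq_zero [FiniteDimensional ℂ E]
    (hS : Fintype.card S < finrank ℂ E) (v : E) : ∃ w ≠ 0, ∀ a, B a v w + B a w v = 0 := by
  obtain ⟨w, hw, hw0⟩ := Submodule.exists_mem_ne_zero_of_ne_bot <|
    LinearMap.ker_ne_bot_of_finrank_lt (f := LinearMap.pi fun a => B a v + (B a).flip v)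
      (by simpa using hS)
  exact ⟨w, hw0, fun a => by simpa using congrFun (LinearMap.mem_ker.1 hw) a⟩

theorem apply_smul_of_sum_norm_sq_eq_of_ne_zero (hid : ∀ X, ∑ a, ‖B a X X‖ ^ 2 = ‖X‖ ^ 2 * f X)
    {c : ℂ} (hc : c ≠ 0) {X : E} (hX : X ≠ 0) : f (c • X) = ‖c‖ ^ 2 * f X := by
  have h := hid (c • X)
  simp only [map_smul, LinearMap.smul_apply, smul_eq_mul, norm_mul, mul_pow, ← Finset.mul_sum,
    hid X, norm_smul] at h
  have : ‖c‖ ^ 2 * ‖X‖ ^ 2 ≠ 0 := by positivity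
  apply mul_left_cancel₀ this
  linear_combination -h

theorem apply_zero_of_sum_norm_sq_eq [Nontrivial E] (hf : Continuous f)
    (hid : ∀ X, ∑ a, ‖B a X X‖ ^ 2 = ‖X‖ ^ 2 * f X) : f 0 = 0 := by
  obtain ⟨X, hX⟩ := exists_ne (0 : E)
  have hline : (fun t : ℝ => f ((t : ℂ) • X)) = fun t => t ^ 2 * f X :=
    Continuous.ext_on (dense_compl_singleton 0) (by fun_prop) (by fun_prop) fun t ht => by
      rw [apply_smul_of_sum_norm_sq_eq_of_ne_zero B hid (ofReal_ne_zero.2 ht) hX, norm_real,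
        Real.norm_eq_abs, sq_abs]
  simpa using congrFun hline 0

theorem apply_smul_of_sum_norm_sq_eq [Nontrivial E] (hf : Continuous f)
    (hid : ∀ X, ∑ a, ‖B a X X‖ ^ 2 = ‖X‖ ^ 2 * f X) (c : ℂ) (X : E) :
    f (c • X) = ‖c‖ ^ 2 * f X := by
  rcases eq_or_ne c 0 with rfl | hc
  · simp [apply_zero_of_sum_norm_sq_eq B hf hid]
  rcases eq_or_ne X 0 with rfl | hX
  · simp [apply_zero_of_sum_norm_sq_eq B hf hid]
  exact apply_smul_of_sum_norm_sq_eq_of_ne_zero B hid hc hX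

theorem nonneg_of_sum_norm_sq_eq [Nontrivial E] (hf : Continuous f)
    (hid : ∀ X, ∑ a, ‖B a X X‖ ^ 2 = ‖X‖ ^ 2 * f X) (X : E) : 0 ≤ f X := by
  rcases eq_or_ne X 0 with rfl | hX
  · rw [apply_zero_of_sum_norm_sq_eq B hf hid]
  exact nonneg_of_mul_nonneg_right (by rw [← hid X]; positivity) (by positivity)

theorem apply_self_eq_zero_of_sum_norm_sq_eq_norm_sq_mul_re [FiniteDimensional ℂ E]
    {h : E →ₗ⋆[ℂ] E →ₗ[ℂ] ℂ} (hh : h.IsPosSemidef) (hS : Fintype.card S < finrank ℂ E)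
    (hid : ∀ X, ∑ a, ‖B a X X‖ ^ 2 = ‖X‖ ^ 2 * (h X X).re) (a : S) (X : E) : B a X X = 0 := by
  suffices hzero : ∀ v, (h v v).re = 0 by
    have hX := hid X
    rw [hzero, mul_zero, Finset.sum_eq_zero_iff_of_nonneg fun _ _ => by positivity] at hX
    simpa using hX a (mem_univ a)
  intro v
  by_contra hv
  have hv_pos : 0 < (h v v).re := (nonneg_iff.1 (hh.isNonneg.nonneg v)).1.lt_of_ne' hv
  have hv0 : v ≠ 0 := by rintro rfl; simp at hv
  have hQv : ∃ a, B a v v ≠ 0 := by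
    by_contra! hQ
    have := hid v
    simp only [hQ, norm_zero, ne_eq, OfNat.ofNat_ne_zero, not_false_eq_true, zero_pow,
      Finset.sum_const_zero] at this
    exact (mul_pos (by positivity) hv_pos).ne this
  obtain ⟨w, hw0, hker⟩ := exists_ne_zero_forall_add_flip_eq_zero B hS v
  have hnorm : ∀ X : E, (innerₛₗ ℂ X X).re = ‖X‖ ^ 2 := fun X => inner_self_eq_norm_sq (𝕜 := ℂ) X
  have hpol := sum_norm_sq_add_flip_eq B (g := innerₛₗ ℂ) ⟨fun x y => inner_conj_symm y x⟩
    hh.isSymm (by simpa only [hnorm] using hid) v w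
  simp only [hker, norm_zero, ne_eq, OfNat.ofNat_ne_zero, not_false_eq_true, zero_pow,
    Finset.sum_const_zero, hnorm] at hpol
  rw [innerₛₗ_apply_apply] at hpol
  have hnot_parallel : ‖inner ℂ v w‖ < ‖v‖ * ‖w‖ := by
    refine (norm_inner_le_norm v w).lt_of_ne fun heq => ?_
    obtain ⟨c, hc, rfl⟩ := (norm_inner_eq_norm_iff hv0 hw0).1 heq
    obtain ⟨a, ha⟩ := hQv
    have := hker a
    simp only [map_smul, LinearMap.smul_apply, smul_eq_mul, ← two_mul] at this
    simp_all
  have hre : -(‖inner ℂ v w‖ * ‖h v w‖) ≤ (inner ℂ v w * conj (h v w)).re := by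
    simpa using neg_le_of_abs_le (abs_re_le_norm (inner ℂ v w * conj (h v w)))
  have := two_mul_mul_lt_sq_mul_add_sq_mul (norm_pos_iff.2 hv0) (norm_pos_iff.2 hw0) hv_pos
    (nonneg_iff.1 (hh.isNonneg.nonneg w)).1 (norm_nonneg _) hnot_parallel
    (hh.norm_sq_apply_le v w)
  linarith

theorem apply_self_eq_zero_of_sum_norm_sq_eq_norm_sq_mul [FiniteDimensional ℂ E]
    (hf : ContDiff ℝ 2 f) (hS : Fintype.card S < finrank ℂ E)
    (hid : ∀ X, ∑ a, ‖B a X X‖ ^ 2 = ‖X‖ ^ 2 * f X) (a : S) (X : E) : B a X X = 0 := by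
  have : Nontrivial E := Module.nontrivial_of_finrank_pos (hS.trans_le' (Nat.zero_le _))
  obtain ⟨h, hh, hxx⟩ :=
    exists_isSymm_sesqForm_of_contDiff hf (apply_smul_of_sum_norm_sq_eq B hf.continuous hid)
  have hpos : h.IsPosSemidef :=
    ⟨hh, ⟨fun X => by simp [hxx, nonneg_of_sum_norm_sq_eq B hf.continuous hid X]⟩⟩
  exact apply_self_eq_zero_of_sum_norm_sq_eq_norm_sq_mul_re B hpos hS
    (fun X => by simp [hid X, hxx]) a X

end InnerProductSpace

theorem Matrix.eq_zero_of_toLinearMap₂'_apply_self {ι : Type*} [Fintype ι] [DecidableEq ι]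
    {M : Matrix ι ι ℂ} (hM : M.IsSymm)
    (h : ∀ x, Matrix.toLinearMap₂' ℂ M (S₁ := ℂ) (S₂ := ℂ) x x = 0) : M = 0 := by
  ext i j
  have hentry : ∀ k l,
      Matrix.toLinearMap₂' ℂ M (S₁ := ℂ) (S₂ := ℂ) (Pi.single k 1) (Pi.single l 1) = M k l :=
    fun k l => by simp [Matrix.toLinearMap₂'_apply', dotProduct, Matrix.mulVec, Pi.single_apply]
  have := LinearMap.IsAlt.neg h (Pi.single i 1) (Pi.single j 1)
  rw [hentry, hentry, hM.apply i j] at this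
  exact self_eq_neg.1 this.symm

theorem sum_of_squares_rigidity_general (n : ℕ) (S : Type*) [Fintype S]
    (hcard : Fintype.card S ≤ n - 1)
    (A : S → Fin n → Fin n → ℂ) (hsym : ∀ a α β, A a α β = A a β α)
    (Afun : (Fin n → ℂ) → ℝ) (hAfun : AnalyticOn ℝ Afun Set.univ)
    (hreal : ∀ X : Fin n → ℂ,
      (∑ a, Complex.normSq (∑ α, ∑ β, A a α β * X α * X β) : ℝ) =
        (∑ α, Complex.normSq (X α)) * Afun X) :
    ∀ a α β, A a α β = 0 := by
  intro a α β
  let Q (a : S) := Matrix.toLinearMap₂' ℂ (.of (A a)) (S₁ := ℂ) (S₂ := ℂ)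
  let L := (WithLp.linearEquiv 2 ℂ (Fin n → ℂ)).toLinearMap
  let B (a : S) : EuclideanSpace ℂ (Fin n) →ₗ[ℂ] EuclideanSpace ℂ (Fin n) →ₗ[ℂ] ℂ :=
    (Q a).compl₁₂ L L
  have hf : ContDiff ℝ 2 fun X : EuclideanSpace ℂ (Fin n) => Afun X.ofLp :=
    (contDiffOn_univ.1 ((analyticOn_univ.1 hAfun).contDiffOn uniqueDiffOn_univ)).comp
      (PiLp.continuousLinearEquiv 2 ℝ fun _ : Fin n => ℂ).contDiff
  have hid : ∀ X : EuclideanSpace ℂ (Fin n), ∑ a, ‖B a X X‖ ^ 2 = ‖X‖ ^ 2 * Afun X.ofLp := by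
    intro X
    simp only [EuclideanSpace.norm_sq_eq, ← normSq_eq_norm_sq, ← hreal]
    refine sum_congr rfl fun b _ => congrArg normSq ?_
    simp only [B, Q, L, LinearMap.compl₁₂_apply, LinearEquiv.coe_coe, WithLp.coe_linearEquiv,
      Matrix.toLinearMap₂'_apply', dotProduct, Matrix.mulVec, Matrix.of_apply, Finset.mul_sum]
    exact sum_congr rfl fun i _ => sum_congr rfl fun j _ => by ring
  have hS : Fintype.card S < finrank ℂ (EuclideanSpace ℂ (Fin n)) := by
    have := α.pos
    simp only [finrank_euclideanSpace_fin]
    omega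
  exact congrFun₂ (Matrix.eq_zero_of_toLinearMap₂'_apply_self (.ext fun i j => hsym a j i)
    fun X => apply_self_eq_zero_of_sum_norm_sq_eq_norm_sq_mul B hf hS hid a (WithLp.toLp 2 X)) α β

/-- Huang's rigidity lemma applied to a sum of squares of quadratic forms. -/
theorem sum_of_squares_rigidity (n : ℕ) (hn : 2 ≤ n) (S : Type*) [Fintype S]
    (hcard : Fintype.card S ≤ n - 1)
    (A : S → Fin n → Fin n → ℂ) (hsym : ∀ a α β, A a α β = A a β α)
    (Afun : (Fin n → ℂ) → ℝ) (hAfun : AnalyticOn ℝ Afun Set.univ)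
    (hreal : ∀ X : Fin n → ℂ,
      (∑ a, Complex.normSq (∑ α, ∑ β, A a α β * X α * X β) : ℝ) =
        (∑ α, Complex.normSq (X α)) * Afun X) :
    ∀ a α β, A a α β = 0 :=
  sum_of_squares_rigidity_general n S hcard A hsym Afun hAfun hreal
end

section
/- Let $N > n \ge 1$. Suppose $\hat R_{\alpha\bar\beta\mu\bar\nu}$ and $R_{\alpha\bar\beta\mu\bar\nu}$ ($1\le\alpha,\beta,\mu,\nu\le n$) are two tensors each pseudo-conformally flat with respect to positive definite Hermitian metrics $(\hat g_{\alpha\bar\beta})$ and $(g_{\alpha\bar\beta})$ respectively, where $\hat g_{\alpha\bar\beta} = c\, g_{\alpha\bar\beta}$ for some constant $c > 0$. Suppose moreover that $\hat R_{\alpha\bar\beta\mu\bar\nu} - R_{\alpha\bar\beta\mu\bar\nu} = \sum_{A,B=n+1}^N h^A_{\alpha\mu}\overline{h^B_{\beta\nu}}\,G_{A\bar B}$ for complex numbers $h^A_{\alpha\mu}$ symmetric in $\alpha,\mu$ and a positive definite Hermitian matrix $(G_{A\bar B})$. If $N \le 2n-1$, then $h^A_{\alpha\mu} = 0$ for all $A,\alpha,\mu$.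 -/
/-- A tensor is pseudo-conformally flat with respect to a Hermitian metric `g` if it
decomposes as `H_{αβ̄}g_{μν̄} + Ĥ_{μβ̄}g_{αν̄} + H*_{αν̄}g_{μβ̄} + H̃_{μν̄}g_{αβ̄}`
with `H, Ĥ, H*, H̃` Hermitian. -/
def PseudoConformallyFlat {n : ℕ} (T : Fin n → Fin n → Fin n → Fin n → ℂ)
    (g : Fin n → Fin n → ℂ) : Prop :=
  ∃ H Hhat Hstar Htilde : Fin n → Fin n → ℂ,
    (∀ α β, H α β = (starRingEnd ℂ) (H β α)) ∧
    (∀ α β, Hhat α β = (starRingEnd ℂ) (Hhat β α)) ∧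
    (∀ α β, Hstar α β = (starRingEnd ℂ) (Hstar β α)) ∧
    (∀ α β, Htilde α β = (starRingEnd ℂ) (Htilde β α)) ∧
    ∀ α β μ ν, T α β μ ν =
      H α β * g μ ν + Hhat μ β * g α ν + Hstar α ν * g μ β + Htilde μ ν * g α β

/-!
Symmetrising the Gauss equation in `α ↔ μ` and in `β ↔ ν` writes the tensor
`∑ h^A_{αμ} conj (h^B_{βν}) G_{AB̄}` as
`F_{αβ̄}g_{μν̄} + F_{μβ̄}g_{αν̄} + F_{αν̄}g_{μβ̄} + F_{μν̄}g_{αβ̄}` for a single Hermitian `F`, the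
average of the four coefficient matrices of `R̂ - R` (which is pseudo-conformally flat for `g`
because `ĝ = c g`). For the `ℂ^{N-n}`-valued form `h(x, z)` this reads
`⟨h(x,z), h(y,w)⟩_G = F(x,y)g(z,w) + F(z,y)g(x,w) + F(x,w)g(z,y) + F(z,w)g(x,y)`;
in particular `|h(v,v)|²_G = 4 F(v,v) g(v,v)`, so `F ≥ 0`.

Suppose `h(x,x) ≠ 0`, so that `F(x,x) > 0`. Since `N - n < n`, some `z ≠ 0` has `h(x,z) = 0`,
and this `z` is not a multiple of `x`. Pairing `h(x,z) = 0` with `h(x,x)`, `h(z,z)` and `h(x,z)`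
gives, for `a = g(x,x)`, `b = g(z,z)`, `f = F(x,x)`, `e = F(z,z)` and `p = |g(z,x)|²`, the relations
`fab + ea² = 2fp` and `(bf - ae)p = 0`. If `p = 0` the first is impossible; otherwise `bf = ae` and
the first gives `p = ab`, against the strict Cauchy–Schwarz inequality for `g`. Hence `h(x,x) = 0`
for every `x`, and `h = 0` by polarisation.
-/

open Finset ComplexConjugate

variable {ι κ : Type*} [Fintype ι]

def symmProd (F g : Matrix ι ι ℂ) : ι → ι → ι → ι → ℂ :=
  fun α β μ ν => F α β * g μ ν + F μ β * g α ν + F α ν * g μ β + F μ ν * g α β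

noncomputable def gaussTensor [Fintype κ] (h : κ → ι → ι → ℂ) (G : Matrix κ κ ℂ) :
    ι → ι → ι → ι → ℂ :=
  fun α β μ ν => ∑ A, ∑ B, h A α μ * conj (h B β ν) * G A B

namespace PseudoConformallyFlat

variable {n : ℕ} {T T' : Fin n → Fin n → Fin n → Fin n → ℂ} {g : Fin n → Fin n → ℂ}

theorem of_conformal {c : ℝ} (hT : PseudoConformallyFlat T fun α β => (c : ℂ) * g α β) :
    PseudoConformallyFlat T g := by
  obtain ⟨H₁, H₂, H₃, H₄, h₁, h₂, h₃, h₄, hT⟩ := hT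
  refine ⟨fun α β => c * H₁ α β, fun α β => c * H₂ α β, fun α β => c * H₃ α β,
    fun α β => c * H₄ α β, ?_, ?_, ?_, ?_, fun α β μ ν => by rw [hT]; ring⟩ <;>
  intro α β <;> simp [h₁ α β, h₂ α β, h₃ α β, h₄ α β]

theorem sub (hT : PseudoConformallyFlat T g) (hT' : PseudoConformallyFlat T' g) :
    PseudoConformallyFlat (T - T') g := by
  obtain ⟨H₁, H₂, H₃, H₄, h₁, h₂, h₃, h₄, hT⟩ := hT
  obtain ⟨K₁, K₂, K₃, K₄, k₁, k₂, k₃, k₄, hT'⟩ := hT'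
  refine ⟨H₁ - K₁, H₂ - K₂, H₃ - K₃, H₄ - K₄, ?_, ?_, ?_, ?_, fun α β μ ν => ?_⟩
  · intro α β; simp [h₁ α β, k₁ α β]
  · intro α β; simp [h₂ α β, k₂ α β]
  · intro α β; simp [h₃ α β, k₃ α β]
  · intro α β; simp [h₄ α β, k₄ α β]
  · simp only [Pi.sub_apply, hT, hT']; ring

theorem exists_isHermitian_of_symm (hT : PseudoConformallyFlat T g)
    (hαμ : ∀ α β μ ν, T μ β α ν = T α β μ ν) (hβν : ∀ α β μ ν, T α ν μ β = T α β μ ν) :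
    ∃ F : Matrix (Fin n) (Fin n) ℂ, F.IsHermitian ∧ T = symmProd F g := by
  obtain ⟨H₁, H₂, H₃, H₄, h₁, h₂, h₃, h₄, hT⟩ := hT
  refine ⟨fun α β => (H₁ α β + H₂ α β + H₃ α β + H₄ α β) / 4,
    Matrix.IsHermitian.ext fun α β => ?_, ?_⟩
  · simp [h₁ α β, h₂ α β, h₃ α β, h₄ α β]
  · funext α β μ ν
    have hswap₁ := hαμ α β μ ν
    have hswap₂ := hβν α β μ ν
    have hswap₁₂ := (hαμ α ν μ β).trans (hβν α β μ ν)
    simp only [symmProd, hT] at hswap₁ hswap₂ hswap₁₂ ⊢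
    linear_combination -(hswap₁ + hswap₂ + hswap₁₂) / 4

end PseudoConformallyFlat

noncomputable def sesqForm (M : Matrix ι ι ℂ) (x y : ι → ℂ) : ℂ :=
  ∑ i, ∑ j, M i j * x i * conj (y j)

section sesqForm

variable {M : Matrix ι ι ℂ}

theorem conj_sesqForm (hM : M.IsHermitian) (x y : ι → ℂ) :
    conj (sesqForm M x y) = sesqForm M y x := by
  simp only [sesqForm, map_sum, map_mul, Complex.conj_conj]
  rw [Finset.sum_comm]
  refine sum_congr rfl fun j _ => sum_congr rfl fun i _ => ?_
  rw [← hM.apply j i, Complex.star_def]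
  ring

theorem ofReal_re_sesqForm_self (hM : M.IsHermitian) (x : ι → ℂ) :
    ((sesqForm M x x).re : ℂ) = sesqForm M x x :=
  Complex.conj_eq_iff_re.mp (conj_sesqForm hM x x)

theorem sesqForm_zero_left (y : ι → ℂ) : sesqForm M 0 y = 0 := by simp [sesqForm]

theorem sesqForm_zero_right (x : ι → ℂ) : sesqForm M x 0 = 0 := by simp [sesqForm]

theorem sesqForm_smul_add_smul_self (r s : ℂ) (u v : ι → ℂ) :
    sesqForm M (r • u + s • v) (r • u + s • v) =
      r * conj r * sesqForm M u u + r * conj s * sesqForm M u v +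
      s * conj r * sesqForm M v u + s * conj s * sesqForm M v v := by
  simp only [sesqForm, Pi.add_apply, Pi.smul_apply, smul_eq_mul, map_add, map_mul, mul_sum,
    ← sum_add_distrib]
  refine sum_congr rfl fun i _ => sum_congr rfl fun j _ => ?_
  ring

theorem normSq_sesqForm_lt (hM : M.IsHermitian) (hMPos : ∀ v ≠ 0, 0 < (sesqForm M v v).re)
    {x z : ι → ℂ} (hx : x ≠ 0) (hzx : ∀ c : ℂ, z ≠ c • x) :
    Complex.normSq (sesqForm M z x) < (sesqForm M z z).re * (sesqForm M x x).re := by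
  set a := (sesqForm M x x).re
  set γ := sesqForm M z x
  have ha : 0 < a := hMPos x hx
  have hw : (a : ℂ) • z + (-γ) • x ≠ 0 := by
    intro hw
    refine hzx (γ / a) ?_
    have ha' : (a : ℂ) ≠ 0 := by exact_mod_cast ha.ne'
    ext i
    have hwi := congrFun hw i
    simp only [Pi.add_apply, Pi.smul_apply, smul_eq_mul, Pi.zero_apply] at hwi
    rw [Pi.smul_apply, smul_eq_mul, div_mul_eq_mul_div, eq_div_iff ha']
    linear_combination hwi
  have hww : sesqForm M ((a : ℂ) • z + (-γ) • x) ((a : ℂ) • z + (-γ) • x) =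
      ((a * ((sesqForm M z z).re * a - Complex.normSq γ) : ℝ) : ℂ) := by
    rw [sesqForm_smul_add_smul_self, ← conj_sesqForm hM z x, Complex.conj_ofReal]
    push_cast
    rw [ofReal_re_sesqForm_self hM, ofReal_re_sesqForm_self hM, Complex.normSq_eq_conj_mul_self]
    ring
  have hpos := hMPos _ hw
  rw [hww, Complex.ofReal_re] at hpos
  nlinarith

end sesqForm

/-- `tensorForm T x y z w` is `T(x, ȳ, z, w̄)`, summed in the order `α μ β ν` in which
`sesqForm G (h(x, z)) (h(y, w))` expands. -/
noncomputable def tensorForm (T : ι → ι → ι → ι → ℂ) (x y z w : ι → ℂ) : ℂ :=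
  ∑ α, ∑ μ, ∑ β, ∑ ν, T α β μ ν * x α * z μ * conj (y β) * conj (w ν)

section tensorForm

variable (T T₁ T₂ T₃ T₄ : ι → ι → ι → ι → ℂ) (x y z w : ι → ℂ)

theorem tensorForm_add4 :
    tensorForm (fun α β μ ν => T₁ α β μ ν + T₂ α β μ ν + T₃ α β μ ν + T₄ α β μ ν) x y z w =
      tensorForm T₁ x y z w + tensorForm T₂ x y z w + tensorForm T₃ x y z w +
        tensorForm T₄ x y z w := by
  simp only [tensorForm, add_mul, sum_add_distrib]

theorem tensorForm_swap_left :
    tensorForm (fun α β μ ν => T μ β α ν) x y z w = tensorForm T z y x w := by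
  simp only [tensorForm]
  rw [sum_comm]
  ac_rfl

theorem tensorForm_swap_right :
    tensorForm (fun α β μ ν => T α ν μ β) x y z w = tensorForm T x w z y := by
  simp only [tensorForm]
  refine sum_congr rfl fun α _ => sum_congr rfl fun μ _ => ?_
  rw [sum_comm]
  ac_rfl

theorem tensorForm_mul (F g : Matrix ι ι ℂ) :
    tensorForm (fun α β μ ν => F α β * g μ ν) x y z w = sesqForm F x y * sesqForm g z w := by
  simp only [tensorForm, sesqForm, sum_mul_sum]
  ac_rfl

end tensorForm

noncomputable def secondFundamentalForm (h : κ → ι → ι → ℂ) (x : ι → ℂ) :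
    (ι → ℂ) →ₗ[ℂ] κ → ℂ :=
  Matrix.mulVecLin (Matrix.of fun A μ => ∑ α, h A α μ * x α)

theorem secondFundamentalForm_apply (h : κ → ι → ι → ℂ) (x z : ι → ℂ) (A : κ) :
    secondFundamentalForm h x z A = ∑ α, ∑ μ, h A α μ * x α * z μ := by
  simp only [secondFundamentalForm, Matrix.mulVecLin_apply, Matrix.mulVec, dotProduct,
    Matrix.of_apply, sum_mul]
  exact sum_comm

theorem eq_zero_of_secondFundamentalForm_self_eq_zero {h : κ → ι → ι → ℂ}
    (hsym : ∀ A α μ, h A α μ = h A μ α) (h0 : ∀ x, secondFundamentalForm h x x = 0)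
    (A : κ) (α μ : ι) : h A α μ = 0 := by
  classical
  have hdiag : ∀ i, h A i i = 0 := fun i => by
    simpa [secondFundamentalForm_apply, Pi.single_apply] using congrFun (h0 (Pi.single i 1)) A
  have hpair := congrFun (h0 (Pi.single α 1 + Pi.single μ 1)) A
  rw [secondFundamentalForm_apply] at hpair
  simp only [Pi.add_apply, Pi.zero_apply, mul_add, add_mul, sum_add_distrib] at hpair
  simpa [Pi.single_apply, hdiag, hsym A μ α] using hpair

variable [Fintype κ]

theorem exists_ne_zero_secondFundamentalForm_eq_zero (h : κ → ι → ι → ℂ)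
    (hκι : Fintype.card κ < Fintype.card ι) (x : ι → ℂ) :
    ∃ z ≠ 0, secondFundamentalForm h x z = 0 := by
  obtain ⟨z, hz, hz0⟩ := (Submodule.ne_bot_iff _).mp <|
    LinearMap.ker_ne_bot_of_finrank_lt (f := secondFundamentalForm h x) (by simpa using hκι)
  exact ⟨z, hz0, hz⟩

theorem sesqForm_secondFundamentalForm (h : κ → ι → ι → ℂ) (G : Matrix κ κ ℂ)
    (x y z w : ι → ℂ) :
    sesqForm G (secondFundamentalForm h x z) (secondFundamentalForm h y w) =
      tensorForm (gaussTensor h G) x y z w := by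
  simp only [sesqForm, tensorForm, gaussTensor, secondFundamentalForm_apply, map_sum, map_mul,
    mul_assoc]
  simp only [sum_mul]
  -- at these types `sum_comm` only moves `κ`-sums inside `ι`-sums, so it cannot loop
  simp only [mul_sum, sum_comm (γ := κ) (α := ι)]
  ac_rfl

section GaussIdentity

variable {h : κ → ι → ι → ℂ} {G : Matrix κ κ ℂ} {F g : Matrix ι ι ℂ}

theorem sesqForm_secondFundamentalForm_of_eq
    (hS : gaussTensor h G = symmProd F g) (x y z w : ι → ℂ) :
    sesqForm G (secondFundamentalForm h x z) (secondFundamentalForm h y w) =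
      sesqForm F x y * sesqForm g z w + sesqForm F z y * sesqForm g x w +
        sesqForm F x w * sesqForm g z y + sesqForm F z w * sesqForm g x y := by
  rw [sesqForm_secondFundamentalForm, hS]
  unfold symmProd
  rw [tensorForm_add4,
    tensorForm_swap_left (fun α β μ ν => F α β * g μ ν),
    tensorForm_swap_right (fun α β μ ν => F α β * g μ ν),
    tensorForm_swap_left (fun α β μ ν => F α ν * g μ β),
    tensorForm_swap_right (fun α β μ ν => F α β * g μ ν) z y x w]
  simp only [tensorForm_mul]

theorem sesqForm_secondFundamentalForm_self
    (hS : gaussTensor h G = symmProd F g)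
    (hF : F.IsHermitian) (hg : g.IsHermitian) (v : ι → ℂ) :
    sesqForm G (secondFundamentalForm h v v) (secondFundamentalForm h v v) =
      (4 * (sesqForm F v v).re * (sesqForm g v v).re : ℝ) := by
  rw [sesqForm_secondFundamentalForm_of_eq hS]
  push_cast
  rw [ofReal_re_sesqForm_self hF, ofReal_re_sesqForm_self hg]
  ring

theorem re_sesqForm_self_nonneg
    (hS : gaussTensor h G = symmProd F g)
    (hF : F.IsHermitian) (hg : g.IsHermitian) (hgPos : ∀ v ≠ 0, 0 < (sesqForm g v v).re)
    (hGPos : ∀ v ≠ 0, 0 < (sesqForm G v v).re) (v : ι → ℂ) : 0 ≤ (sesqForm F v v).re := by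
  rcases eq_or_ne v 0 with rfl | hv
  · simp [sesqForm_zero_left]
  have hG : 0 ≤ (sesqForm G (secondFundamentalForm h v v) (secondFundamentalForm h v v)).re := by
    rcases eq_or_ne (secondFundamentalForm h v v) 0 with h0 | h0
    · simp [h0, sesqForm_zero_left]
    · exact (hGPos _ h0).le
  rw [sesqForm_secondFundamentalForm_self hS hF hg, Complex.ofReal_re] at hG
  nlinarith [hgPos v hv]

theorem re_sesqForm_self_pos
    (hS : gaussTensor h G = symmProd F g)
    (hF : F.IsHermitian) (hg : g.IsHermitian) (hgPos : ∀ v ≠ 0, 0 < (sesqForm g v v).re)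
    (hGPos : ∀ v ≠ 0, 0 < (sesqForm G v v).re) {v : ι → ℂ}
    (hv : secondFundamentalForm h v v ≠ 0) :
    0 < (sesqForm F v v).re := by
  have hv0 : v ≠ 0 := by rintro rfl; exact hv (map_zero _)
  have hG := hGPos _ hv
  rw [sesqForm_secondFundamentalForm_self hS hF hg, Complex.ofReal_re] at hG
  nlinarith [hgPos v hv0]

theorem re_sesqForm_relations_of_secondFundamentalForm_eq_zero
    (hS : gaussTensor h G = symmProd F g)
    (hF : F.IsHermitian) (hg : g.IsHermitian) {x z : ι → ℂ}
    (hxz : secondFundamentalForm h x z = 0) :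
    (sesqForm F x x).re * (sesqForm g x x).re * (sesqForm g z z).re +
        (sesqForm F z z).re * (sesqForm g x x).re ^ 2 =
      2 * (sesqForm F x x).re * Complex.normSq (sesqForm g z x) ∧
    ((sesqForm g z z).re * (sesqForm F x x).re - (sesqForm g x x).re * (sesqForm F z z).re) *
      Complex.normSq (sesqForm g z x) = 0 := by
  have hpair := sesqForm_secondFundamentalForm_of_eq hS
  have hxz_xx := hpair x x z x
  have hzz_xz := hpair z x z z
  have hxz_xz := hpair x x z z
  rw [hxz, sesqForm_zero_left] at hxz_xx hxz_xz
  rw [hxz, sesqForm_zero_right] at hzz_xz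
  rw [← conj_sesqForm hg z x, ← conj_sesqForm hF z x] at hxz_xz
  set a := (sesqForm g x x).re
  set b := (sesqForm g z z).re
  set f := (sesqForm F x x).re
  set e := (sesqForm F z z).re
  set γ := sesqForm g z x
  set φ := sesqForm F z x
  have ha : sesqForm g x x = a := (ofReal_re_sesqForm_self hg x).symm
  have hb : sesqForm g z z = b := (ofReal_re_sesqForm_self hg z).symm
  have hf : sesqForm F x x = f := (ofReal_re_sesqForm_self hF x).symm
  have he : sesqForm F z z = e := (ofReal_re_sesqForm_self hF z).symm
  simp only [ha, hb, hf, he] at hxz_xx hzz_xz hxz_xz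
  have hp : (Complex.normSq γ : ℂ) = conj γ * γ := Complex.normSq_eq_conj_mul_self
  have hconj : f * conj γ + a * conj φ = 0 := by
    simpa using congrArg conj (show (f : ℂ) * γ + a * φ = 0 by linear_combination -hxz_xx / 2)
  constructor
  · exact_mod_cast (show ((f * a * b + e * a ^ 2 : ℝ) : ℂ) = (2 * f * Complex.normSq γ : ℝ) by
      push_cast
      linear_combination -a * hxz_xz + conj γ * hxz_xx / 2 - γ * hconj - 2 * f * hp)
  · exact_mod_cast (show (((b * f - a * e) * Complex.normSq γ : ℝ) : ℂ) = 0 by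
      push_cast
      linear_combination conj γ * (a * hzz_xz - b * hxz_xx) / 2 + (b * f - a * e) * hp)

theorem secondFundamentalForm_self_eq_zero_of_eq_zero (hS : gaussTensor h G = symmProd F g)
    (hF : F.IsHermitian) (hg : g.IsHermitian) (hgPos : ∀ v ≠ 0, 0 < (sesqForm g v v).re)
    (hGPos : ∀ v ≠ 0, 0 < (sesqForm G v v).re) {x z : ι → ℂ} (hz : z ≠ 0)
    (hxz : secondFundamentalForm h x z = 0) :
    secondFundamentalForm h x x = 0 := by
  by_contra hxx
  have hx : x ≠ 0 := by rintro rfl; exact hxx (map_zero _)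
  have ha := hgPos x hx
  have hb := hgPos z hz
  have hf := re_sesqForm_self_pos hS hF hg hgPos hGPos hxx
  have he := re_sesqForm_self_nonneg hS hF hg hgPos hGPos z
  obtain ⟨hdiag, hcross⟩ := re_sesqForm_relations_of_secondFundamentalForm_eq_zero hS hF hg hxz
  have hCS := normSq_sesqForm_lt hg hgPos hx fun c hc => hxx <| by
    have hc0 : c ≠ 0 := by rintro rfl; exact hz (by simpa using hc)
    have hcxx : c • secondFundamentalForm h x x = 0 := by rw [← map_smul, ← hc, hxz]
    exact (smul_eq_zero.mp hcxx).resolve_left hc0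
  rcases mul_eq_zero.mp hcross with hbf | hp0
  · nlinarith [mul_pos hf (sub_pos.mpr hCS)]
  · rw [hp0] at hdiag
    nlinarith [mul_pos (mul_pos hf ha) hb, mul_nonneg he (sq_nonneg (sesqForm g x x).re)]

end GaussIdentity

theorem conformal_pcf_rigidity_general (n N : ℕ) (hn : 1 ≤ n) (hN : N ≤ 2 * n - 1)
    (g ghat : Fin n → Fin n → ℂ) (c : ℝ)
    (hghat : ∀ α β, ghat α β = (c : ℂ) * g α β)
    (hgHerm : ∀ α β, g α β = (starRingEnd ℂ) (g β α))
    (hgPos : ∀ v : Fin n → ℂ, v ≠ 0 →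
      0 < (∑ α, ∑ β, g α β * v α * (starRingEnd ℂ) (v β)).re)
    (Rhat R : Fin n → Fin n → Fin n → Fin n → ℂ)
    (hRhat : PseudoConformallyFlat Rhat ghat)
    (hR : PseudoConformallyFlat R g)
    (h : Fin (N - n) → Fin n → Fin n → ℂ)
    (hsym : ∀ A α μ, h A α μ = h A μ α)
    (G : Fin (N - n) → Fin (N - n) → ℂ)
    (hGPos : ∀ v : Fin (N - n) → ℂ, v ≠ 0 →
      0 < (∑ A, ∑ B, G A B * v A * (starRingEnd ℂ) (v B)).re)
    (hGauss : ∀ α β μ ν, Rhat α β μ ν - R α β μ ν =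
      ∑ A, ∑ B, h A α μ * (starRingEnd ℂ) (h B β ν) * G A B) :
    ∀ A α μ, h A α μ = 0 := by
  obtain rfl : ghat = fun α β => (c : ℂ) * g α β := funext₂ hghat
  have hS : PseudoConformallyFlat (gaussTensor h G) g := by
    rw [show gaussTensor h G = Rhat - R by funext α β μ ν; exact (hGauss α β μ ν).symm]
    exact hRhat.of_conformal.sub hR
  obtain ⟨F, hF, hSF⟩ := hS.exists_isHermitian_of_symm
    (fun α β μ ν => by simp only [gaussTensor, hsym _ μ α])
    (fun α β μ ν => by simp only [gaussTensor, hsym _ ν β])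
  have hg : Matrix.IsHermitian g := Matrix.IsHermitian.ext fun α β => (hgHerm α β).symm
  refine eq_zero_of_secondFundamentalForm_self_eq_zero hsym fun x => ?_
  obtain ⟨z, hz, hxz⟩ :=
    exists_ne_zero_secondFundamentalForm_eq_zero h (by simp only [Fintype.card_fin]; omega) x
  exact secondFundamentalForm_self_eq_zero_of_eq_zero hSF hF hg hgPos hGPos hz hxz

/-- Pointwise algebraic core of Theorem 1.2: the second fundamental form vanishes. -/
theorem conformal_pcf_rigidity (n N : ℕ) (hn : 1 ≤ n) (hnN : n < N) (hN : N ≤ 2 * n - 1)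
    (g ghat : Fin n → Fin n → ℂ) (c : ℝ) (hc : 0 < c)
    (hghat : ∀ α β, ghat α β = (c : ℂ) * g α β)
    (hgHerm : ∀ α β, g α β = (starRingEnd ℂ) (g β α))
    (hgPos : ∀ v : Fin n → ℂ, v ≠ 0 →
      0 < (∑ α, ∑ β, g α β * v α * (starRingEnd ℂ) (v β)).re)
    (Rhat R : Fin n → Fin n → Fin n → Fin n → ℂ)
    (hRhat : PseudoConformallyFlat Rhat ghat)
    (hR : PseudoConformallyFlat R g)
    (h : Fin (N - n) → Fin n → Fin n → ℂ)
    (hsym : ∀ A α μ, h A α μ = h A μ α)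
    (G : Fin (N - n) → Fin (N - n) → ℂ)
    (hGHerm : ∀ A B, G A B = (starRingEnd ℂ) (G B A))
    (hGPos : ∀ v : Fin (N - n) → ℂ, v ≠ 0 →
      0 < (∑ A, ∑ B, G A B * v A * (starRingEnd ℂ) (v B)).re)
    (hGauss : ∀ α β μ ν, Rhat α β μ ν - R α β μ ν =
      ∑ A, ∑ B, h A α μ * (starRingEnd ℂ) (h B β ν) * G A B) :
    ∀ A α μ, h A α μ = 0 :=
  conformal_pcf_rigidity_general n N hn hN g ghat c hghat hgHerm hgPos Rhat R hRhat hR h hsym G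
    hGPos hGauss
end
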